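/- Let G be a finite group, N ⊴ G a normal subgroup of index prime to p, and P ≤ N a p-subgroup. Then P is a radical p-subgroup of N if and only if P is a radical p-subgroup of G. -/

import Mathlib

/-- The subgroup of `G` generated by all subgroups of `N` that are `p`-groups and
are normalized by `N`, i.e. `O_p(N)`, the largest normal `p`-subgroup of `N`. -/
def relPCore (p : ℕ) {G : Type*} [Group G] (N : Subgroup G) : Subgroup G :=
  sSup {Q : Subgroup G | Q ≤ N ∧ IsPGroup p Q ∧ ∀ n ∈ N, ∀ x ∈ Q, n * x * n⁻¹ ∈ Q}

/-!
Write `H = N_G(P)`. Since `N ⊓ H` is normal in `H`, the characteristic subgroup `O_p(N ⊓ H)` is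
normal in `H`, so `O_p(N ⊓ H) ≤ O_p(H)`. Conversely `O_p(H) ⊓ (N ⊓ H)` is a normal `p`-subgroup
of `N ⊓ H`, and it is all of `O_p(H)` because a `p`-subgroup has trivial image in `G ⧸ N`, whose
order is prime to `p`. As `P` is a normal `p`-subgroup of both `H` and `N ⊓ H`, it lies in both
cores, and the two conditions `O_p(N ⊓ H) = P` and `O_p(H) = P` become equivalent.
-/

open Subgroup

theorem IsPGroup.le_of_not_dvd_index {G : Type*} [Group G] {p : ℕ} [Fact p.Prime]
    {Q N : Subgroup G} [N.Normal] (hQ : IsPGroup p Q) (hidx : ¬ p ∣ N.index) : Q ≤ N := by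
  have hcard : Nat.card (Q.map (QuotientGroup.mk' N)) = 1 := by
    refine (hQ.map _).card_eq_or_dvd.resolve_right fun hdvd => hidx ?_
    exact hdvd.trans (card_subgroup_dvd_card _)
  rwa [card_eq_one, Subgroup.map_eq_bot_iff, QuotientGroup.ker_mk'] at hcard

section RelPCore

variable {G G' : Type*} [Group G] [Group G'] {p : ℕ} {N M K Q : Subgroup G}

def normalPSubgroups (p : ℕ) (N : Subgroup G) : Set (Subgroup G) :=
  {Q | Q ≤ N ∧ IsPGroup p Q ∧ N ≤ normalizer (Q : Set G)}

theorem relPCore_eq_sSup_normalPSubgroups : relPCore p N = sSup (normalPSubgroups p N) := by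
  simp only [relPCore, normalPSubgroups, le_normalizer_iff]

theorem le_relPCore (hQN : Q ≤ N) (hQ : IsPGroup p Q) (hNQ : N ≤ normalizer (Q : Set G)) :
    Q ≤ relPCore p N :=
  relPCore_eq_sSup_normalPSubgroups (N := N) ▸ le_sSup ⟨hQN, hQ, hNQ⟩

theorem relPCore_le : relPCore p N ≤ N :=
  relPCore_eq_sSup_normalPSubgroups (N := N) ▸ sSup_le fun _ hQ => hQ.1

theorem map_relPCore_le (f : G →* G') : (relPCore p N).map f ≤ relPCore p (N.map f) := by
  rw [relPCore_eq_sSup_normalPSubgroups, (gc_map_comap f).l_sSup]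
  exact iSup₂_le fun Q hQ =>
    le_relPCore (map_mono hQ.1) (hQ.2.1.map f) ((map_mono hQ.2.2).trans (le_normalizer_map f))

theorem normalizer_le_normalizer_relPCore :
    normalizer (N : Set G) ≤ normalizer (relPCore p N : Set G) := by
  refine le_normalizer_iff.2 fun g hg x hx => ?_
  have hconj : N.map (MulAut.conj g).toMonoidHom = N := mem_normalizer_iff_map_conj_eq.1 hg
  exact hconj ▸ map_relPCore_le (MulAut.conj g).toMonoidHom ⟨x, hx, rfl⟩

theorem le_normalizer_relPCore : N ≤ normalizer (relPCore p N : Set G) :=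
  le_normalizer.trans normalizer_le_normalizer_relPCore

theorem supClosed_normalPSubgroups [Fact p.Prime] : SupClosed (normalPSubgroups p N) :=
  fun Q₁ hQ₁ Q₂ hQ₂ =>
    ⟨sup_le hQ₁.1 hQ₂.1, hQ₁.2.1.to_sup_of_normal_right' hQ₂.2.1 (hQ₁.1.trans hQ₂.2.2),
      (le_inf hQ₁.2.2 hQ₂.2.2).trans (normalizer_inf_normalizer_le_normalizer_sup Q₁ Q₂)⟩

theorem isPGroup_relPCore [Finite G] [Fact p.Prime] : IsPGroup p (relPCore p N) := by
  have hbot : ⊥ ∈ normalPSubgroups p N := ⟨bot_le, .of_bot, le_normalizer_of_normal⟩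
  rw [relPCore_eq_sSup_normalPSubgroups]
  exact (supClosed_normalPSubgroups.sSup_mem (Set.toFinite _) hbot subset_rfl).2.1

theorem relPCore_le_relPCore_of_le_normalizer (hMK : M ≤ K) (hK : K ≤ normalizer (M : Set G))
    [Finite G] [Fact p.Prime] : relPCore p M ≤ relPCore p K :=
  le_relPCore (relPCore_le.trans hMK) isPGroup_relPCore (hK.trans normalizer_le_normalizer_relPCore)

theorem relPCore_inf_le_relPCore (hMK : M ≤ K) [Finite G] [Fact p.Prime] :
    relPCore p K ⊓ M ≤ relPCore p M :=
  le_relPCore inf_le_right isPGroup_relPCore.to_inf_left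
    ((le_inf (hMK.trans le_normalizer_relPCore) le_normalizer).trans
      inf_normalizer_le_normalizer_inf)

end RelPCore

/-- Let `N ⊴ G` be of index prime to `p` and `P ≤ N` a `p`-subgroup. Then `P` is a
radical `p`-subgroup of `N` (i.e. `O_p(N_N(P)) = P`) if and only if `P` is a radical
`p`-subgroup of `G` (i.e. `O_p(N_G(P)) = P`). -/
theorem stmt6 {G : Type*} [Group G] [Finite G] (p : ℕ) (hp : p.Prime)
    (N : Subgroup G) [N.Normal] (hidx : ¬ p ∣ N.index)
    (P : Subgroup G) (hPN : P ≤ N) (hP : IsPGroup p P) :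
    relPCore p (N ⊓ Subgroup.normalizer (P : Set G)) = P ↔ relPCore p (Subgroup.normalizer (P : Set G)) = P := by
  have := Fact.mk hp
  set H := normalizer (P : Set G)
  have hP_le_H : P ≤ relPCore p H := le_relPCore le_normalizer hP le_rfl
  have hP_le_NH : P ≤ relPCore p (N ⊓ H) := le_relPCore (le_inf hPN le_normalizer) hP inf_le_right
  constructor
  · intro h
    have hH_le_N : relPCore p H ≤ N := isPGroup_relPCore.le_of_not_dvd_index hidx
    refine le_antisymm ?_ hP_le_H
    calc relPCore p H = relPCore p H ⊓ (N ⊓ H) := (inf_eq_left.2 (le_inf hH_le_N relPCore_le)).symm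
      _ ≤ relPCore p (N ⊓ H) := relPCore_inf_le_relPCore inf_le_right
      _ = P := h
  · intro h
    have hNH_normal : H ≤ normalizer (N ⊓ H : Set G) :=
      (le_inf le_normalizer_of_normal le_normalizer).trans inf_normalizer_le_normalizer_inf
    exact ((relPCore_le_relPCore_of_le_normalizer inf_le_right hNH_normal).trans h.le).antisymm hP_le_NH
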